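/- arXiv:1510.07919 — 2 statements merged into one kernel-verified Lean document; each statement's English description precedes it below -/
import Mathlib

section
/- Let N be a near hexagon of order (2,2). If N has 63 points, then any two points of N at distance 2 have exactly one common neighbor, so N is a generalized hexagon of order (2,2); if N has 27 points, then any two points of N at distance 2 have exactly two common neighbors. -/
/-- The collinearity graph of a point-line geometry whose lines are given as
sets of points: two points are adjacent when they are distinct and lie on a
common line. -/
def collGraph {P : Type*} (Lines : Set (Set P)) : SimpleGraph P where
  Adj x y := x ≠ y ∧ ∃ L ∈ Lines, x ∈ L ∧ y ∈ L
  symm := by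
    constructor
    rintro x y ⟨hxy, L, hL, hx, hy⟩
    exact ⟨hxy.symm, L, hL, hy, hx⟩
  loopless := by
    constructor
    rintro x ⟨h, -⟩
    exact h rfl

/-- A near `2d`-gon: a partial linear space (every line carries at least two
points, two distinct points lie on at most one common line) whose collinearity
graph is connected of diameter `d`, and in which for every point `x` and every
line `L` there is a unique point of `L` nearest to `x`.  A near hexagon is a
`NearPolygon P 3`, a near octagon is a `NearPolygon P 4`. -/
structure NearPolygon (P : Type*) (d : ℕ) where
  Lines : Set (Set P)
  two_pts : ∀ L ∈ Lines, ∃ x ∈ L, ∃ y ∈ L, x ≠ y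
  unique_line : ∀ L₁ ∈ Lines, ∀ L₂ ∈ Lines, ∀ x y : P,
    x ≠ y → x ∈ L₁ → y ∈ L₁ → x ∈ L₂ → y ∈ L₂ → L₁ = L₂
  connected : (collGraph Lines).Connected
  diam_le : ∀ x y : P, (collGraph Lines).dist x y ≤ d
  diam_eq : ∃ x y : P, (collGraph Lines).dist x y = d
  near : ∀ (x : P), ∀ L ∈ Lines, ∃! y, y ∈ L ∧
    ∀ z ∈ L, (collGraph Lines).dist x y ≤ (collGraph Lines).dist x z

/-- A near polygon has order `(s,t)` if every line is incident with exactly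
`s+1` points and every point is incident with exactly `t+1` lines. -/
def NearPolygon.hasOrder {P : Type*} {d : ℕ} (N : NearPolygon P d) (s t : ℕ) : Prop :=
  (∀ L ∈ N.Lines, L.ncard = s + 1) ∧
  (∀ x : P, {L | L ∈ N.Lines ∧ x ∈ L}.ncard = t + 1)

/-- A semi-valuation: every line `L` contains a unique point `xL` such that
every other point of `L` has value `f xL + 1`. -/
def IsSemiValuation {P : Type*} (Lines : Set (Set P)) (f : P → ℤ) : Prop :=
  ∀ L ∈ Lines, ∃! xL, xL ∈ L ∧ ∀ x ∈ L, x ≠ xL → f x = f xL + 1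

/-- A valuation: a semi-valuation whose minimum value is `0`. -/
def IsValuation {P : Type*} (Lines : Set (Set P)) (f : P → ℤ) : Prop :=
  IsSemiValuation Lines f ∧ (∀ x, 0 ≤ f x) ∧ (∃ x, f x = 0)

/-- `ι` realizes the geometry with lines `LQ` as a full isometrically embedded
subgeometry of the geometry with lines `LP` (lines being identified with their
point sets, fullness amounts to lines mapping onto lines). -/
structure IsFullIsomEmb {Q P : Type*} (LQ : Set (Set Q)) (LP : Set (Set P))
    (ι : Q → P) : Prop where
  inj : Function.Injective ι
  line_map : ∀ L ∈ LQ, ι '' L ∈ LP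
  isometric : ∀ x y : Q, (collGraph LP).dist (ι x) (ι y) = (collGraph LQ).dist x y

/-- The distance `d(x, P)` from a point `x` of the ambient geometry to the
point set of the embedded subgeometry. -/
noncomputable def distToSub {Q P : Type*} (LP : Set (Set P)) (ι : Q → P) (x : P) : ℕ :=
  sInf (Set.range fun z : Q => (collGraph LP).dist x (ι z))

/-- The function `f_x : y ↦ d(x, y) - d(x, P)` induced on the embedded
subgeometry by a point `x` of the ambient geometry. -/
noncomputable def inducedVal {Q P : Type*} (LP : Set (Set P)) (ι : Q → P) (x : P) :
    Q → ℤ :=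
  fun y => ((collGraph LP).dist x (ι y) : ℤ) - (distToSub LP ι x : ℤ)

/-- Two valuations are neighboring if `|f1 x - f2 x + ε| ≤ 1` for all `x`,
for some integer `ε`. -/
def Neighboring {P : Type*} (f1 f2 : P → ℤ) : Prop :=
  ∃ ε : ℤ, ∀ x, |f1 x - f2 x + ε| ≤ 1

/-- The semi-valuation `f3'` built from two neighboring valuations `f1, f2`
and a compatible `ε`. -/
def starFun {P : Type*} (f1 f2 : P → ℤ) (ε : ℤ) (x : P) : ℤ :=
  if f1 x = f2 x - ε then f1 x - 1 else max (f1 x) (f2 x - ε)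

/-- `StarRel f1 f2 f3` expresses `f1 * f2 = f3`: some `ε ∈ {-1,0,1}` witnesses
that `f1` and `f2` are neighboring, and, for every such `ε`, subtracting the
minimum value `m` of `f3' = starFun f1 f2 ε` from `f3'` yields `f3`. -/
def StarRel {P : Type*} (f1 f2 f3 : P → ℤ) : Prop :=
  (∃ ε ∈ ({-1, 0, 1} : Set ℤ), ∀ x, |f1 x - f2 x + ε| ≤ 1) ∧
  ∀ ε ∈ ({-1, 0, 1} : Set ℤ), (∀ x, |f1 x - f2 x + ε| ≤ 1) →
    ∃ m : ℤ, IsLeast (Set.range (starFun f1 f2 ε)) m ∧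
      ∀ x, f3 x = starFun f1 f2 ε x - m

/-- A subspace: together with two distinct collinear points it contains every
line through them. -/
def IsSubspace {P : Type*} (Lines : Set (Set P)) (X : Set P) : Prop :=
  ∀ L ∈ Lines, ∀ x ∈ L, ∀ y ∈ L, x ≠ y → x ∈ X → y ∈ X → L ⊆ X

/-- A convex subspace: a subspace containing every point on a shortest path
between any two of its points. -/
def IsConvexSubspace {P : Type*} (Lines : Set (Set P)) (X : Set P) : Prop :=
  IsSubspace Lines X ∧
  ∀ x ∈ X, ∀ y ∈ X, ∀ z : P,
    (collGraph Lines).dist x z + (collGraph Lines).dist z y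
      = (collGraph Lines).dist x y → z ∈ X

/-- A quad: a convex subspace of diameter `2` inducing (with the lines fully
contained in it) a nondegenerate generalized quadrangle. -/
def IsQuad {P : Type*} (Lines : Set (Set P)) (Q : Set P) : Prop :=
  IsConvexSubspace Lines Q ∧
  (∀ x ∈ Q, ∀ y ∈ Q, (collGraph Lines).dist x y ≤ 2) ∧
  (∃ x ∈ Q, ∃ y ∈ Q, (collGraph Lines).dist x y = 2) ∧
  (∀ x ∈ Q, ∀ L ∈ Lines, L ⊆ Q → x ∉ L →
    ∃! y, y ∈ L ∧ (collGraph Lines).Adj x y) ∧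
  (∀ x ∈ Q, ∃ L₁ ∈ Lines, ∃ L₂ ∈ Lines,
    L₁ ⊆ Q ∧ L₂ ⊆ Q ∧ x ∈ L₁ ∧ x ∈ L₂ ∧ L₁ ≠ L₂) ∧
  (∃ x ∈ Q, ∃ y ∈ Q, x ≠ y ∧ ¬ (collGraph Lines).Adj x y)

/-- A quad has order `(s,t')` if each of its lines has `s+1` points and each
of its points is on exactly `t'+1` lines contained in the quad. -/
def QuadHasOrder {P : Type*} (Lines : Set (Set P)) (Q : Set P) (s t' : ℕ) : Prop :=
  (∀ L ∈ Lines, L ⊆ Q → L.ncard = s + 1) ∧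
  (∀ x ∈ Q, {L | L ∈ Lines ∧ L ⊆ Q ∧ x ∈ L}.ncard = t' + 1)

/-!
Fix a point `x` and sort the points by their distance to `x`. On a line through a point `p`,
either `p` is the point nearest to `x` and the two other points are one step farther, or one of
them is one step nearer and the other is as far as `p`. Summing over the three lines through `p`,
(farther neighbours of `p`) + 2 (nearer neighbours of `p`) = 6. Hence `x` has 6 neighbours, each
of them has 4 neighbours at distance 2, each point at distance 3 has 3 neighbours at distance 2,
and a point `p` at distance 2 with `μ(p)` common neighbours with `x` has `6 - 2μ(p)` neighbours at
distance 3. Double counting the edges between consecutive spheres around `x` gives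
`∑ μ(p) = 24` over the sphere `Γ₂(x)` and `3 |Γ₂(x)| = |P| + 9`.

With 63 points, `|Γ₂(x)| = 24` and `μ ≥ 1` force `μ = 1`. With 27 points, `|Γ₂(x)| = 12` and
`μ ≤ 3`, so `μ = 2` throughout once `μ = 3` is excluded: if `x, y` had three common neighbours
`z₁, z₂, z₃`, the lines through the third points of the lines `xzᵢ` show that every point of
`Γ₂(x)` is adjacent to some `zᵢ`, whence `|Γ₂(x)| ≤ 4 + 3 + 3 = 10`.
-/

theorem Set.eq_triple_of_ncard_eq_three {α : Type*} {s : Set α} (hs : s.ncard = 3) {a b c : α}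
    (ha : a ∈ s) (hb : b ∈ s) (hc : c ∈ s) (hab : a ≠ b) (hac : a ≠ c) (hbc : b ≠ c) :
    s = {a, b, c} := by
  refine (Set.eq_of_subset_of_ncard_le ?_ ?_ (Set.finite_of_ncard_pos (by omega))).symm
  · simp [Set.insert_subset_iff, ha, hb, hc]
  · rw [hs, Set.ncard_insert_of_notMem (by simp [hab, hac]), Set.ncard_pair hbc]

theorem Set.exists_eq_triple_of_ncard_eq_three_of_mem_of_mem {α : Type*} {s : Set α}
    (hs : s.ncard = 3) {a b : α} (ha : a ∈ s) (hb : b ∈ s) (hab : a ≠ b) :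
    ∃ c, c ≠ a ∧ c ≠ b ∧ s = {a, b, c} := by
  obtain ⟨c, hc, hcab⟩ := Set.exists_mem_notMem_of_ncard_lt_ncard
    (s := {a, b}) (t := s) (by rw [Set.ncard_pair hab, hs]; omega)
  simp only [Set.mem_insert_iff, Set.mem_singleton_iff, not_or] at hcab
  exact ⟨c, hcab.1, hcab.2, Set.eq_triple_of_ncard_eq_three hs ha hb hc hab
    (Ne.symm hcab.1) (Ne.symm hcab.2)⟩

theorem Set.exists_eq_triple_of_ncard_eq_three_of_mem {α : Type*} {s : Set α} (hs : s.ncard = 3)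
    {a : α} (ha : a ∈ s) : ∃ b c, b ≠ a ∧ c ≠ a ∧ b ≠ c ∧ s = {a, b, c} := by
  obtain ⟨b, hb, hba⟩ := Set.exists_ne_of_one_lt_ncard (s := s) (by omega) a
  obtain ⟨c, hca, hcb, rfl⟩ :=
    Set.exists_eq_triple_of_ncard_eq_three_of_mem_of_mem hs ha hb hba.symm
  exact ⟨b, c, hba, hca, hcb.symm, rfl⟩

open Classical in
theorem Set.ncard_pair_inter {α : Type*} (s : Set α) {a b : α} (hab : a ≠ b) :
    ({a, b} ∩ s).ncard = (if a ∈ s then 1 else 0) + (if b ∈ s then 1 else 0) := by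
  by_cases ha : a ∈ s <;> by_cases hb : b ∈ s <;>
    simp [Set.insert_inter_of_mem, Set.insert_inter_of_notMem, Set.singleton_inter_of_mem,
      Set.singleton_inter_of_notMem, ha, hb, hab]

theorem SimpleGraph.Connected.dist_eq_two_iff {V : Type*} {G : SimpleGraph V} (hG : G.Connected)
    {u v : V} : G.dist u v = 2 ↔ u ≠ v ∧ ¬ G.Adj u v ∧ (G.commonNeighbors u v).Nonempty := by
  rw [← SimpleGraph.edist_eq_two_iff, ← (hG u v).coe_dist_eq_edist]
  norm_cast

namespace NearPolygon

section

variable {P : Type*} {d : ℕ} {N : NearPolygon P d}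

local notation "δ" => SimpleGraph.dist (collGraph N.Lines)
local infix:50 " ∼ " => SimpleGraph.Adj (collGraph N.Lines)
local notation "Γ" => SimpleGraph.neighborSet (collGraph N.Lines)

noncomputable def sphere [Fintype P] (N : NearPolygon P d) (x : P) (i : ℕ) : Finset P :=
  {p | (collGraph N.Lines).dist x p = i}

@[simp]
theorem mem_sphere [Fintype P] {x p : P} {i : ℕ} : p ∈ N.sphere x i ↔ δ x p = i := by
  simp [sphere]

@[simp]
theorem coe_sphere [Fintype P] (x : P) (i : ℕ) : (N.sphere x i : Set P) = {p | δ x p = i} := by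
  ext; simp

theorem adj_of_mem_line {L : Set P} (hL : L ∈ N.Lines) {a b : P} (ha : a ∈ L) (hb : b ∈ L)
    (hab : a ≠ b) : a ∼ b :=
  ⟨hab, L, hL, ha, hb⟩

theorem exists_nearest_point (x : P) {L : Set P} (hL : L ∈ N.Lines) :
    ∃ m ∈ L, ∀ c ∈ L, c ≠ m → δ x c = δ x m + 1 := by
  obtain ⟨m, ⟨hmL, hmin⟩, huniq⟩ := N.near x L hL
  refine ⟨m, hmL, fun c hc hcm => ?_⟩
  have hle : δ x c ≤ δ x m + 1 := by
    have hmc := adj_of_mem_line hL hmL hc hcm.symm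
    simpa [SimpleGraph.dist_eq_one_iff_adj.mpr hmc] using hmc.reachable.dist_triangle_right x
  by_contra hne
  exact hcm (huniq c ⟨hc, fun c' hc' => by have := hmin c hc; have := hmin c' hc'; omega⟩)

theorem dist_eq_add_one_of_mem_line (x : P) {L : Set P} (hL : L ∈ N.Lines) {a b c : P}
    (ha : a ∈ L) (hb : b ∈ L) (hc : c ∈ L) (hab : δ x b = δ x a + 1) (hca : c ≠ a) :
    δ x c = δ x a + 1 := by
  obtain ⟨m, hm, hprof⟩ := exists_nearest_point x hL
  obtain rfl : a = m := by
    by_contra ham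
    have := hprof a ha ham
    by_cases hbm : b = m
    · subst hbm; omega
    · have := hprof b hb hbm; omega
  exact hprof c hc hca

theorem dist_add_one_of_dist_eq (x : P) {a b c : P} (hL : {a, b, c} ∈ N.Lines) (hab : a ≠ b)
    (h : δ x a = δ x b) : δ x c + 1 = δ x a := by
  obtain ⟨m, hm, hprof⟩ := exists_nearest_point x hL
  rcases hm with rfl | rfl | rfl
  · have := hprof b (by simp) hab.symm; omega
  · have := hprof a (by simp) hab; omega
  · by_cases ham : a = m
    · subst ham
      have := hprof b (by simp) hab.symm; omega
    · have := hprof a (by simp) ham; omega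

theorem mem_line_of_adj_of_adj {L : Set P} (hL : L ∈ N.Lines) {a b p : P} (ha : a ∈ L)
    (hb : b ∈ L) (hab : a ≠ b) (hpa : p ∼ a) (hpb : p ∼ b) : p ∈ L := by
  have hda := SimpleGraph.dist_eq_one_iff_adj.mpr hpa
  have hdb := SimpleGraph.dist_eq_one_iff_adj.mpr hpb
  obtain ⟨m, hm, hprof⟩ := exists_nearest_point p hL
  by_cases ham : a = m
  · subst ham; have := hprof b hb hab.symm; omega
  · have := hprof a ha ham
    obtain rfl : p = m := N.connected.dist_eq_zero_iff.mp (by omega)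
    exact hm

theorem not_adj_of_mem_of_mem {L₁ L₂ : Set P} (hL₁ : L₁ ∈ N.Lines) (hL₂ : L₂ ∈ N.Lines)
    (hne : L₁ ≠ L₂) {p a b : P} (hp₁ : p ∈ L₁) (hp₂ : p ∈ L₂) (ha : a ∈ L₁) (hb : b ∈ L₂)
    (hap : a ≠ p) (hbp : b ≠ p) : ¬ a ∼ b := by
  rintro ⟨hab, K, hK, haK, hbK⟩
  have hpK := mem_line_of_adj_of_adj hK haK hbK hab
    (adj_of_mem_line hL₁ hp₁ ha hap.symm) (adj_of_mem_line hL₂ hp₂ hb hbp.symm)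
  exact hne ((N.unique_line K hK L₁ hL₁ p a hap.symm hpK haK hp₁ ha).symm.trans
    (N.unique_line K hK L₂ hL₂ p b hbp.symm hpK hbK hp₂ hb))

theorem notMem_line_of_commonNeighbors {x y z z' : P} (hxy : δ x y = 2)
    (hz : x ∼ z ∧ z ∼ y) (hz' : x ∼ z' ∧ z' ∼ y) (hzz' : z ≠ z') {L : Set P} (hL : L ∈ N.Lines)
    (hxL : x ∈ L) (hzL : z ∈ L) : z' ∉ L := by
  intro hz'L
  have hyL := mem_line_of_adj_of_adj hL hzL hz'L hzz' hz.2.symm hz'.2.symm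
  have hxy' : x ≠ y := by rintro rfl; simp at hxy
  have := SimpleGraph.dist_eq_one_iff_adj.mpr (adj_of_mem_line hL hxL hyL hxy')
  omega

theorem dist_eq_two_of_commonNeighbors {x y z z' : P} (hxy : δ x y = 2)
    (hz : x ∼ z ∧ z ∼ y) (hz' : x ∼ z' ∧ z' ∼ y) (hzz' : z ≠ z') {u : P}
    (hL : {x, z, u} ∈ N.Lines) (hux : u ≠ x) : δ z' u = 2 := by
  have hz'L := notMem_line_of_commonNeighbors hxy hz hz' hzz' hL (by simp) (by simp)
  obtain ⟨hxz', L', hL', hxL', hz'L'⟩ := hz'.1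
  have hne : L' ≠ {x, z, u} := fun h => hz'L (h ▸ hz'L')
  refine N.connected.dist_eq_two_iff.mpr ⟨fun h => hz'L (by simp [h]), ?_, x, ?_⟩
  · exact not_adj_of_mem_of_mem hL' hL hne hxL' (by simp) hz'L' (by simp) hxz'.symm hux
  · exact ⟨hz'.1.symm, adj_of_mem_line hL (by simp) (by simp) hux⟩

theorem dist_eq_two_of_mem_line_commonNeighbor {x y z w : P} (hxy : δ x y = 2)
    (hz : x ∼ z ∧ z ∼ y) (hM : {y, z, w} ∈ N.Lines) (hwz : w ≠ z) : δ x w = 2 := by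
  have hxz : δ x z = 1 := SimpleGraph.dist_eq_one_iff_adj.mpr hz.1
  have := dist_eq_add_one_of_mem_line x hM (a := z) (b := y) (by simp) (by simp) (by simp)
    (by omega) hwz
  omega

theorem adj_of_third_points {x y z z' : P} (hxy : δ x y = 2) (hz : x ∼ z ∧ z ∼ y)
    (hz' : x ∼ z' ∧ z' ∼ y) (hzz' : z ≠ z') {u w : P} (hL : {x, z', u} ∈ N.Lines)
    (hM : {y, z, w} ∈ N.Lines) (hwy : w ≠ y) (hwz : w ≠ z) : w ∼ u := by
  have hwx : δ w x = 2 := by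
    rw [SimpleGraph.dist_comm]; exact dist_eq_two_of_mem_line_commonNeighbor hxy hz hM hwz
  have hwz' : δ w z' = 2 := by
    rw [SimpleGraph.dist_comm]
    exact dist_eq_two_of_commonNeighbors (SimpleGraph.dist_comm.trans hxy)
      ⟨hz.2.symm, hz.1.symm⟩ ⟨hz'.2.symm, hz'.1.symm⟩ hzz' hM hwy
  have := dist_add_one_of_dist_eq w hL hz'.1.ne (hwx.trans hwz'.symm)
  exact SimpleGraph.dist_eq_one_iff_adj.mp (by omega)

theorem adj_third_point_of_third_points {x y z z' z'' : P} (hxy : δ x y = 2)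
    (hz : x ∼ z ∧ z ∼ y) (hz' : x ∼ z' ∧ z' ∼ y) (hz'' : x ∼ z'' ∧ z'' ∼ y) (hzz'' : z ≠ z'')
    (hz'z'' : z' ≠ z'') {u w t : P} (hL : {x, z, u} ∈ N.Lines) (hux : u ≠ x)
    (hM : {y, z', w} ∈ N.Lines) (hwy : w ≠ y) (hwz' : w ≠ z') (hK : {u, w, t} ∈ N.Lines) :
    z'' ∼ t := by
  have hu : δ z'' u = 2 := dist_eq_two_of_commonNeighbors hxy hz hz'' hzz'' hL hux
  have hw : δ z'' w = 2 := dist_eq_two_of_commonNeighbors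
    (SimpleGraph.dist_comm.trans hxy) ⟨hz'.2.symm, hz'.1.symm⟩ ⟨hz''.2.symm, hz''.1.symm⟩
    hz'z'' hM hwy
  have huw : u ≠ w := by
    rintro rfl
    have := dist_eq_two_of_mem_line_commonNeighbor hxy hz' hM hwz'
    rw [SimpleGraph.dist_eq_one_iff_adj.mpr (adj_of_mem_line hL (by simp) (by simp) hux.symm)]
      at this
    omega
  have := dist_add_one_of_dist_eq z'' hK huw (hu.trans hw.symm)
  exact SimpleGraph.dist_eq_one_iff_adj.mp (by omega)

theorem ne_and_not_adj_of_third_points {x y z z' w w' : P} (hxy : δ x y = 2)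
    (hz : x ∼ z ∧ z ∼ y) (hz' : x ∼ z' ∧ z' ∼ y) (hzz' : z ≠ z') (hM : {y, z, w} ∈ N.Lines)
    (hwy : w ≠ y) (hM' : {y, z', w'} ∈ N.Lines) (hw'y : w' ≠ y) : w ≠ w' ∧ ¬ w ∼ w' := by
  have hz'M : z' ∉ ({y, z, w} : Set P) := notMem_line_of_commonNeighbors
    (SimpleGraph.dist_comm.trans hxy) ⟨hz.2.symm, hz.1.symm⟩ ⟨hz'.2.symm, hz'.1.symm⟩ hzz' hM
    (by simp) (by simp)
  have hne : ({y, z, w} : Set P) ≠ {y, z', w'} := fun h => hz'M (h ▸ by simp)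
  refine ⟨fun h => hne ?_, not_adj_of_mem_of_mem hM hM' hne (by simp) (by simp) (by simp)
    (by simp) hwy hw'y⟩
  exact N.unique_line _ hM _ hM' y w hwy.symm (by simp) (by simp) (by simp) (by simp [h])

theorem one_le_ncard_commonNeighbors [Finite P] {x y : P} (hxy : δ x y = 2) :
    1 ≤ {z | x ∼ z ∧ z ∼ y}.ncard := by
  obtain ⟨c, hc⟩ := (N.connected.dist_eq_two_iff.mp hxy).2.2
  exact (Set.ncard_pos).mpr ⟨c, hc.1, hc.2.symm⟩

theorem ncard_inter_neighborSet {p : P} {L₁ L₂ L₃ : Set P}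
    (hlines : {L | L ∈ N.Lines ∧ p ∈ L} = {L₁, L₂, L₃})
    (h₁₂ : L₁ ≠ L₂) (h₁₃ : L₁ ≠ L₃) (h₂₃ : L₂ ≠ L₃) (hfin : ∀ L ∈ N.Lines, L.Finite)
    (S : Set P) :
    (S ∩ Γ p).ncard =
      (S ∩ (L₁ \ {p})).ncard + (S ∩ (L₂ \ {p})).ncard + (S ∩ (L₃ \ {p})).ncard := by
  have hmem : ∀ {L}, L ∈ ({L₁, L₂, L₃} : Set (Set P)) → L ∈ N.Lines ∧ p ∈ L := fun h => by
    rwa [← hlines] at h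
  have hdisj : ∀ {L L'}, L ∈ ({L₁, L₂, L₃} : Set (Set P)) → L' ∈ ({L₁, L₂, L₃} : Set (Set P)) →
      L ≠ L' → Disjoint (S ∩ (L \ {p})) (S ∩ (L' \ {p})) := by
    intro L L' hL hL' hne
    refine Set.disjoint_left.mpr fun q ⟨_, hqL, hqp⟩ ⟨_, hqL', _⟩ => hne ?_
    exact N.unique_line L (hmem hL).1 L' (hmem hL').1 p q (Ne.symm hqp) (hmem hL).2 hqL
      (hmem hL').2 hqL'
  have hfin' : ∀ {L}, L ∈ ({L₁, L₂, L₃} : Set (Set P)) → (S ∩ (L \ {p})).Finite := fun hL =>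
    ((hfin _ (hmem hL).1).sdiff).inter_of_right S
  have hunion : S ∩ Γ p = S ∩ (L₁ \ {p}) ∪ S ∩ (L₂ \ {p}) ∪ S ∩ (L₃ \ {p}) := by
    ext q
    simp only [Set.mem_inter_iff, Set.mem_union, Set.mem_sdiff, Set.mem_singleton_iff,
      SimpleGraph.mem_neighborSet]
    constructor
    · rintro ⟨hqS, hpq, L, hL, hpL, hqL⟩
      have : L ∈ ({L₁, L₂, L₃} : Set (Set P)) := hlines ▸ ⟨hL, hpL⟩
      rcases this with rfl | rfl | rfl <;> tauto
    · rintro ((⟨hqS, hqL, hqp⟩ | ⟨hqS, hqL, hqp⟩) | ⟨hqS, hqL, hqp⟩) <;>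
        exact ⟨hqS, adj_of_mem_line (hmem (by simp)).1 (hmem (by simp)).2 hqL (Ne.symm hqp)⟩
  rw [hunion, Set.ncard_union_eq _ ((hfin' (by simp)).union (hfin' (by simp))) (hfin' (by simp)),
    Set.ncard_union_eq (hdisj (by simp) (by simp) h₁₂) (hfin' (by simp)) (hfin' (by simp))]
  exact Set.disjoint_union_left.mpr
    ⟨hdisj (by simp) (by simp) h₁₃, hdisj (by simp) (by simp) h₂₃⟩

theorem ncard_farther_add_two_mul_ncard_closer_of_mem_line (x : P) {L : Set P}
    (hL : L ∈ N.Lines) (hs : L.ncard = 3) {p : P} (hp : p ∈ L) :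
    ({q | δ x q = δ x p + 1} ∩ (L \ {p})).ncard +
      2 * ({q | δ x q + 1 = δ x p} ∩ (L \ {p})).ncard = 2 := by
  obtain ⟨a, b, hap, hbp, hab, rfl⟩ := Set.exists_eq_triple_of_ncard_eq_three_of_mem hs hp
  have hrest : ({p, a, b} : Set P) \ {p} = {a, b} := by
    rw [Set.insert_sdiff_self_of_notMem (by simp [hap.symm, hbp.symm])]
  rw [hrest, Set.inter_comm, Set.ncard_pair_inter _ hab, Set.inter_comm,
    Set.ncard_pair_inter _ hab]
  simp only [Set.mem_ofPred_eq]
  obtain ⟨m, hm, hprof⟩ := exists_nearest_point x hL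
  rcases hm with rfl | rfl | rfl
  · have := hprof a (by simp) hap; have := hprof b (by simp) hbp
    split_ifs <;> omega
  · have := hprof p (by simp) hap.symm; have := hprof b (by simp) hab.symm
    split_ifs <;> omega
  · have := hprof p (by simp) hbp.symm; have := hprof a (by simp) hab
    split_ifs <;> omega

theorem ncard_farther_add_two_mul_ncard_closer (hord : N.hasOrder 2 2) (x p : P) :
    ({q | δ x q = δ x p + 1} ∩ Γ p).ncard + 2 * ({q | δ x q + 1 = δ x p} ∩ Γ p).ncard = 6 := by
  obtain ⟨L₁, L₂, L₃, h₁₂, h₁₃, h₂₃, hlines⟩ := Set.ncard_eq_three.mp (hord.2 p)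
  have hfin : ∀ L ∈ N.Lines, L.Finite := fun L hL =>
    Set.finite_of_ncard_pos (by rw [hord.1 L hL]; omega)
  have hline : ∀ L ∈ ({L₁, L₂, L₃} : Set (Set P)),
      ({q | δ x q = δ x p + 1} ∩ (L \ {p})).ncard +
        2 * ({q | δ x q + 1 = δ x p} ∩ (L \ {p})).ncard = 2 := by
    intro L hL
    rw [← hlines] at hL
    exact ncard_farther_add_two_mul_ncard_closer_of_mem_line x hL.1 (hord.1 L hL.1) hL.2
  have h₁ := hline L₁ (by simp)
  have h₂ := hline L₂ (by simp)
  have h₃ := hline L₃ (by simp)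
  rw [ncard_inter_neighborSet hlines h₁₂ h₁₃ h₂₃ hfin,
    ncard_inter_neighborSet hlines h₁₂ h₁₃ h₂₃ hfin]
  omega

theorem ncard_neighborSet (hord : N.hasOrder 2 2) (x : P) : (Γ x).ncard = 6 := by
  have hfar : {q | δ x q = δ x x + 1} ∩ Γ x = Γ x :=
    Set.inter_eq_right.mpr fun q hq => by simpa using hq
  have hclose : {q | δ x q + 1 = δ x x} ∩ Γ x = ∅ := by simp
  have h := ncard_farther_add_two_mul_ncard_closer hord x x
  rwa [hfar, hclose, Set.ncard_empty, mul_zero, add_zero] at h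

theorem ncard_sphere_two_inter_neighborSet_of_adj (hord : N.hasOrder 2 2) {x z : P} (hxz : x ∼ z) :
    ({q | δ x q = 2} ∩ Γ z).ncard = 4 := by
  have hz : δ x z = 1 := SimpleGraph.dist_eq_one_iff_adj.mpr hxz
  have hclose : {q | δ x q + 1 = δ x z} ∩ Γ z = {x} := by
    ext q
    simp only [Set.mem_inter_iff, Set.mem_ofPred_eq, SimpleGraph.mem_neighborSet, hz,
      Nat.add_eq_right, N.connected.dist_eq_zero_iff, Set.mem_singleton_iff]
    constructor
    · exact fun h => h.1.symm
    · rintro rfl; exact ⟨rfl, hxz.symm⟩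
  have h := ncard_farther_add_two_mul_ncard_closer hord x z
  rw [hclose, Set.ncard_singleton, show δ x z + 1 = 2 by omega] at h
  omega

theorem ncard_sphere_three_inter_add_two_mul_ncard_commonNeighbors (hord : N.hasOrder 2 2)
    {x p : P} (hp : δ x p = 2) :
    ({q | δ x q = 3} ∩ Γ p).ncard + 2 * {z | x ∼ z ∧ z ∼ p}.ncard = 6 := by
  have hclose : {q | δ x q + 1 = δ x p} ∩ Γ p = {z | x ∼ z ∧ z ∼ p} := by
    ext q
    simp [hp, SimpleGraph.adj_comm _ p q]
  have h := ncard_farther_add_two_mul_ncard_closer hord x p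
  rwa [hclose, hp] at h

theorem exists_third_point (hord : N.hasOrder 2 2) {a b : P} (hab : a ∼ b) :
    ∃ c, c ≠ a ∧ c ≠ b ∧ {a, b, c} ∈ N.Lines := by
  obtain ⟨hne, L, hL, haL, hbL⟩ := hab
  obtain ⟨c, hca, hcb, rfl⟩ :=
    Set.exists_eq_triple_of_ncard_eq_three_of_mem_of_mem (hord.1 L hL) haL hbL hne
  exact ⟨c, hca, hcb, hL⟩

/-- The lines through `u` are `xz₁u` and the lines joining `u` to the third points `w₂`, `w₃`
of the lines `yz₂`, `yz₃`; the third point of the line `uw₂` is adjacent to `z₃`, and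
symmetrically. -/
theorem adj_or_adj_of_adj_third_point (hord : N.hasOrder 2 2) {x y z₁ z₂ z₃ : P} (hxy : δ x y = 2)
    (hz₁ : x ∼ z₁ ∧ z₁ ∼ y) (hz₂ : x ∼ z₂ ∧ z₂ ∼ y) (hz₃ : x ∼ z₃ ∧ z₃ ∼ y)
    (h₁₂ : z₁ ≠ z₂) (h₁₃ : z₁ ≠ z₃) (h₂₃ : z₂ ≠ z₃) {u : P} (hL : {x, z₁, u} ∈ N.Lines)
    (hux : u ≠ x) {p : P} (hp : δ x p = 2) (hup : u ∼ p) : z₂ ∼ p ∨ z₃ ∼ p := by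
  obtain ⟨w₂, hw₂y, hw₂z, hM₂⟩ := exists_third_point hord hz₂.2.symm
  obtain ⟨w₃, hw₃y, hw₃z, hM₃⟩ := exists_third_point hord hz₃.2.symm
  obtain ⟨t₂, -, -, hK₂⟩ :=
    exists_third_point hord (adj_of_third_points hxy hz₂ hz₁ h₁₂.symm hL hM₂ hw₂y hw₂z).symm
  obtain ⟨t₃, -, -, hK₃⟩ :=
    exists_third_point hord (adj_of_third_points hxy hz₃ hz₁ h₁₃.symm hL hM₃ hw₃y hw₃z).symm
  have hxL : ∀ q ∈ ({x, z₁, u} : Set P), δ x q ≤ 1 := by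
    rintro q (rfl | rfl | rfl)
    · simp
    · exact (SimpleGraph.dist_eq_one_iff_adj.mpr hz₁.1).le
    · exact (SimpleGraph.dist_eq_one_iff_adj.mpr
        (adj_of_mem_line hL (by simp) (by simp) hux.symm)).le
  have hw₂ := dist_eq_two_of_mem_line_commonNeighbor hxy hz₂ hM₂ hw₂z
  have hw₃ := dist_eq_two_of_mem_line_commonNeighbor hxy hz₃ hM₃ hw₃z
  have hK₂L : ({u, w₂, t₂} : Set P) ≠ {x, z₁, u} := fun h => by
    have := hxL w₂ (h ▸ by simp); omega
  have hK₃L : ({u, w₃, t₃} : Set P) ≠ {x, z₁, u} := fun h => by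
    have := hxL w₃ (h ▸ by simp); omega
  have hK₂₃ : ({u, w₂, t₂} : Set P) ≠ {u, w₃, t₃} := fun h => by
    obtain ⟨hne, hnadj⟩ := ne_and_not_adj_of_third_points hxy hz₂ hz₃ h₂₃ hM₂ hw₂y hM₃ hw₃y
    exact hnadj (adj_of_mem_line hK₂ (by simp) (h ▸ by simp) hne)
  have hlines := Set.eq_triple_of_ncard_eq_three (hord.2 u) ⟨hL, by simp⟩ ⟨hK₂, by simp⟩
    ⟨hK₃, by simp⟩ hK₂L.symm hK₃L.symm hK₂₃
  obtain ⟨hup, K, hK, huK, hpK⟩ := hup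
  have hKmem : K ∈ ({{x, z₁, u}, {u, w₂, t₂}, {u, w₃, t₃}} : Set (Set P)) :=
    hlines ▸ ⟨hK, huK⟩
  rcases hKmem with rfl | rfl | rfl
  · have := hxL p hpK; omega
  · rcases hpK with rfl | rfl | rfl
    · exact absurd rfl hup
    · exact Or.inl (adj_of_mem_line hM₂ (by simp) (by simp) hw₂z.symm)
    · exact Or.inr (adj_third_point_of_third_points hxy hz₁ hz₂ hz₃ h₁₃ h₂₃ hL hux hM₂ hw₂y
        hw₂z hK₂)
  · rcases hpK with rfl | rfl | rfl
    · exact absurd rfl hup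
    · exact Or.inr (adj_of_mem_line hM₃ (by simp) (by simp) hw₃z.symm)
    · exact Or.inl (adj_third_point_of_third_points hxy hz₁ hz₃ hz₂ h₁₂ h₂₃.symm hL hux hM₃
        hw₃y hw₃z hK₃)

theorem adj_or_adj_or_adj_of_dist_eq_two (hord : N.hasOrder 2 2) {x y z₁ z₂ z₃ : P}
    (hxy : δ x y = 2) (hμ : {z | x ∼ z ∧ z ∼ y} = {z₁, z₂, z₃}) (h₁₂ : z₁ ≠ z₂) (h₁₃ : z₁ ≠ z₃)
    (h₂₃ : z₂ ≠ z₃) {p : P} (hp : δ x p = 2) : z₁ ∼ p ∨ z₂ ∼ p ∨ z₃ ∼ p := by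
  have hz : ∀ z ∈ ({z₁, z₂, z₃} : Set P), x ∼ z ∧ z ∼ y := fun z h => by rwa [← hμ] at h
  have hz₁ := hz z₁ (by simp)
  have hz₂ := hz z₂ (by simp)
  have hz₃ := hz z₃ (by simp)
  obtain ⟨u₁, hu₁x, hu₁z, hL₁⟩ := exists_third_point hord hz₁.1
  obtain ⟨u₂, hu₂x, hu₂z, hL₂⟩ := exists_third_point hord hz₂.1
  obtain ⟨u₃, hu₃x, hu₃z, hL₃⟩ := exists_third_point hord hz₃.1
  have hL₁₂ : ({x, z₁, u₁} : Set P) ≠ {x, z₂, u₂} := fun h =>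
    notMem_line_of_commonNeighbors hxy hz₁ hz₂ h₁₂ hL₁ (by simp) (by simp) (h ▸ by simp)
  have hL₁₃ : ({x, z₁, u₁} : Set P) ≠ {x, z₃, u₃} := fun h =>
    notMem_line_of_commonNeighbors hxy hz₁ hz₃ h₁₃ hL₁ (by simp) (by simp) (h ▸ by simp)
  have hL₂₃ : ({x, z₂, u₂} : Set P) ≠ {x, z₃, u₃} := fun h =>
    notMem_line_of_commonNeighbors hxy hz₂ hz₃ h₂₃ hL₂ (by simp) (by simp) (h ▸ by simp)
  have hlines := Set.eq_triple_of_ncard_eq_three (hord.2 x) ⟨hL₁, by simp⟩ ⟨hL₂, by simp⟩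
    ⟨hL₃, by simp⟩ hL₁₂ hL₁₃ hL₂₃
  obtain ⟨c, hc⟩ := (N.connected.dist_eq_two_iff.mp hp).2.2
  obtain ⟨⟨hxc, L, hL, hxL, hcL⟩, hpc⟩ := (collGraph N.Lines).mem_commonNeighbors.mp hc
  replace hpc := hpc.symm
  have hLmem : L ∈ ({{x, z₁, u₁}, {x, z₂, u₂}, {x, z₃, u₃}} : Set (Set P)) :=
    hlines ▸ ⟨hL, hxL⟩
  rcases hLmem with rfl | rfl | rfl <;> rcases hcL with rfl | rfl | rfl
  all_goals try first | exact absurd rfl hxc | simp only [hpc, true_or, or_true]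
  · have := adj_or_adj_of_adj_third_point hord hxy hz₁ hz₂ hz₃ h₁₂ h₁₃ h₂₃ hL hu₁x hp hpc
    tauto
  · have := adj_or_adj_of_adj_third_point hord hxy hz₂ hz₁ hz₃ h₁₂.symm h₂₃ h₁₃ hL hu₂x hp hpc
    tauto
  · have := adj_or_adj_of_adj_third_point hord hxy hz₃ hz₁ hz₂ h₁₃.symm h₂₃.symm h₁₂ hL hu₃x hp
      hpc
    tauto

theorem ncard_sphere_two_le_ten (hord : N.hasOrder 2 2) {x y : P} (hxy : δ x y = 2)
    (hμ : {z | x ∼ z ∧ z ∼ y}.ncard = 3) : {p | δ x p = 2}.ncard ≤ 10 := by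
  obtain ⟨z₁, z₂, z₃, h₁₂, h₁₃, h₂₃, hμ⟩ := Set.ncard_eq_three.mp hμ
  set A : P → Set P := fun z => {q | δ x q = 2} ∩ Γ z
  have hA : ∀ z ∈ ({z₁, z₂, z₃} : Set P), (A z).ncard = 4 ∧ y ∈ A z := by
    intro z hz
    rw [← hμ] at hz
    exact ⟨ncard_sphere_two_inter_neighborSet_of_adj hord hz.1, hxy, hz.2⟩
  have hfin : ∀ z ∈ ({z₁, z₂, z₃} : Set P), (A z).Finite := fun z hz =>
    Set.finite_of_ncard_pos (by rw [(hA z hz).1]; omega)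
  have hcover : {p | δ x p = 2} ⊆ A z₁ ∪ (A z₂ \ {y}) ∪ (A z₃ \ {y}) := by
    intro p hp
    by_cases hpy : p = y
    · exact Or.inl (Or.inl (hpy ▸ (hA z₁ (by simp)).2))
    rcases adj_or_adj_or_adj_of_dist_eq_two hord hxy hμ h₁₂ h₁₃ h₂₃ hp with h | h | h
    · exact Or.inl (Or.inl ⟨hp, h⟩)
    · exact Or.inl (Or.inr ⟨⟨hp, h⟩, hpy⟩)
    · exact Or.inr ⟨⟨hp, h⟩, hpy⟩
  calc {p | δ x p = 2}.ncard
      ≤ (A z₁ ∪ (A z₂ \ {y}) ∪ (A z₃ \ {y})).ncard :=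
        Set.ncard_le_ncard hcover (((hfin z₁ (by simp)).union (hfin z₂ (by simp)).sdiff).union
          (hfin z₃ (by simp)).sdiff)
    _ ≤ (A z₁).ncard + (A z₂ \ {y}).ncard + (A z₃ \ {y}).ncard :=
        (Set.ncard_union_le _ _).trans (Nat.add_le_add_right (Set.ncard_union_le _ _) _)
    _ = 10 := by
        rw [Set.ncard_sdiff_singleton_of_mem (hA z₂ (by simp)).2,
          Set.ncard_sdiff_singleton_of_mem (hA z₃ (by simp)).2,
          (hA z₁ (by simp)).1, (hA z₂ (by simp)).1, (hA z₃ (by simp)).1]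

end

section

variable {P : Type*} {N : NearPolygon P 3}

local notation "δ" => SimpleGraph.dist (collGraph N.Lines)
local infix:50 " ∼ " => SimpleGraph.Adj (collGraph N.Lines)
local notation "Γ" => SimpleGraph.neighborSet (collGraph N.Lines)

theorem ncard_sphere_two_inter_neighborSet_of_dist_eq_three (hord : N.hasOrder 2 2) {x q : P}
    (hq : δ x q = 3) :
    ({p | δ x p = 2} ∩ Γ q).ncard = 3 := by
  have hfar : {p | δ x p = δ x q + 1} ∩ Γ q = ∅ := by
    ext p
    simp only [Set.mem_inter_iff, Set.mem_ofPred_eq, Set.mem_empty_iff_false, iff_false, not_and]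
    intro hp
    have := N.diam_le x p
    omega
  have hclose : {p | δ x p + 1 = δ x q} = {p | δ x p = 2} := by
    ext p; simp only [Set.mem_ofPred_eq]; omega
  have h := ncard_farther_add_two_mul_ncard_closer hord x q
  rw [hfar, hclose, Set.ncard_empty] at h
  omega

variable [Fintype P]

theorem card_sphere_one (hord : N.hasOrder 2 2) (x : P) : (N.sphere x 1).card = 6 := by
  classical
  rw [← ncard_neighborSet hord x, Set.ncard_eq_toFinset_card']
  congr 1; ext; simp

theorem sum_ncard_commonNeighbors (hord : N.hasOrder 2 2) (x : P) :
    ∑ p ∈ N.sphere x 2, {z | x ∼ z ∧ z ∼ p}.ncard = 24 := by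
  classical
  have habove : ∀ z ∈ N.sphere x 1, ((N.sphere x 2).bipartiteAbove (· ∼ ·) z).card = 4 := by
    intro z hz
    rw [← ncard_sphere_two_inter_neighborSet_of_adj hord
      (SimpleGraph.dist_eq_one_iff_adj.mp (mem_sphere.mp hz)), Set.ncard_eq_toFinset_card']
    congr 1; ext; simp [Finset.bipartiteAbove]
  have hbelow : ∀ p ∈ N.sphere x 2,
      ((N.sphere x 1).bipartiteBelow (· ∼ ·) p).card = {z | x ∼ z ∧ z ∼ p}.ncard := by
    intro p _
    rw [Set.ncard_eq_toFinset_card']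
    congr 1; ext; simp [Finset.bipartiteBelow]
  have hdouble := Finset.sum_card_bipartiteAbove_eq_sum_card_bipartiteBelow
    (s := N.sphere x 1) (t := N.sphere x 2) (r := (· ∼ ·))
  rw [Finset.sum_congr rfl habove, Finset.sum_congr rfl hbelow, Finset.sum_const,
    card_sphere_one hord] at hdouble
  simpa using hdouble.symm

theorem card_sphere_three_add_sixteen (hord : N.hasOrder 2 2) (x : P) :
    (N.sphere x 3).card + 16 = 2 * (N.sphere x 2).card := by
  classical
  have habove : ∀ q ∈ N.sphere x 3, ((N.sphere x 2).bipartiteAbove (· ∼ ·) q).card = 3 := by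
    intro q hq
    refine Eq.trans ?_ (ncard_sphere_two_inter_neighborSet_of_dist_eq_three hord
      (mem_sphere.mp hq))
    rw [Set.ncard_eq_toFinset_card']
    congr 1; ext; simp [Finset.bipartiteAbove]
  have hbelow : ∀ p ∈ N.sphere x 2,
      ((N.sphere x 3).bipartiteBelow (· ∼ ·) p).card + 2 * {z | x ∼ z ∧ z ∼ p}.ncard = 6 := by
    intro p hp
    rw [← ncard_sphere_three_inter_add_two_mul_ncard_commonNeighbors hord (mem_sphere.mp hp),
      Set.ncard_eq_toFinset_card' ({q | δ x q = 3} ∩ Γ p)]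
    congr 2; ext; simp [Finset.bipartiteBelow, SimpleGraph.adj_comm _ p]
  have hdouble := Finset.sum_card_bipartiteAbove_eq_sum_card_bipartiteBelow
    (s := N.sphere x 3) (t := N.sphere x 2) (r := (· ∼ ·))
  rw [Finset.sum_congr rfl habove, Finset.sum_const, smul_eq_mul] at hdouble
  have hsum := Finset.sum_congr rfl hbelow
  rw [Finset.sum_add_distrib, ← Finset.mul_sum, sum_ncard_commonNeighbors hord, ← hdouble,
    Finset.sum_const, smul_eq_mul] at hsum
  omega

theorem three_mul_card_sphere_two (hord : N.hasOrder 2 2) (x : P) :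
    3 * (N.sphere x 2).card = Nat.card P + 9 := by
  classical
  have hcard : Nat.card P = ∑ i ∈ Finset.range 4, (N.sphere x i).card := by
    rw [Nat.card_eq_fintype_card, ← Finset.card_univ]
    exact Finset.card_eq_sum_card_fiberwise fun p _ => by
      simpa using Nat.lt_succ_of_le (N.diam_le x p)
  have hS₀ : (N.sphere x 0).card = 1 := by
    rw [Finset.card_eq_one]
    exact ⟨x, by ext; simp [N.connected.dist_eq_zero_iff, eq_comm]⟩
  have := card_sphere_three_add_sixteen hord x
  simp only [Finset.sum_range_succ, Finset.sum_range_zero, hS₀, card_sphere_one hord] at hcard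
  omega

theorem ncard_commonNeighbors_eq_one (hord : N.hasOrder 2 2) {x y : P}
    (hS : (N.sphere x 2).card = 24) (hxy : δ x y = 2) :
    {z | x ∼ z ∧ z ∼ y}.ncard = 1 := by
  have hle : ∀ p ∈ N.sphere x 2, 1 ≤ {z | x ∼ z ∧ z ∼ p}.ncard := fun p hp =>
    one_le_ncard_commonNeighbors (mem_sphere.mp hp)
  have hsum : ∑ p ∈ N.sphere x 2, 1 = ∑ p ∈ N.sphere x 2, {z | x ∼ z ∧ z ∼ p}.ncard := by
    rw [sum_ncard_commonNeighbors hord, Finset.sum_const, hS, smul_eq_mul, mul_one]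
  exact ((Finset.sum_eq_sum_iff_of_le hle).mp hsum y (mem_sphere.mpr hxy)).symm

theorem ncard_commonNeighbors_eq_two (hord : N.hasOrder 2 2) {x y : P}
    (hS : (N.sphere x 2).card = 12) (hxy : δ x y = 2) :
    {z | x ∼ z ∧ z ∼ y}.ncard = 2 := by
  have hle : ∀ p ∈ N.sphere x 2, {z | x ∼ z ∧ z ∼ p}.ncard ≤ 2 := by
    intro p hp
    have h6 := ncard_sphere_three_inter_add_two_mul_ncard_commonNeighbors hord (mem_sphere.mp hp)
    have hne3 : {z | x ∼ z ∧ z ∼ p}.ncard ≠ 3 := fun h3 => by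
      have := ncard_sphere_two_le_ten hord (mem_sphere.mp hp) h3
      rw [← coe_sphere, Set.ncard_coe_finset, hS] at this
      omega
    omega
  have hsum : ∑ p ∈ N.sphere x 2, {z | x ∼ z ∧ z ∼ p}.ncard = ∑ p ∈ N.sphere x 2, 2 := by
    rw [sum_ncard_commonNeighbors hord, Finset.sum_const, hS, smul_eq_mul]
  exact (Finset.sum_eq_sum_iff_of_le hle).mp hsum y (mem_sphere.mpr hxy)

end

end NearPolygon

/-- Let `N` be a near hexagon of order `(2,2)`.  If `N` has `63`
points then any two points at distance `2` have exactly one common neighbor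
(so `N` is a generalized hexagon of order `(2,2)`); if `N` has `27` points
then any two points at distance `2` have exactly two common neighbors. -/
theorem near_hexagon_mu_by_card {P : Type*} (N : NearPolygon P 3)
    (hord : N.hasOrder 2 2) :
    (Nat.card P = 63 → ∀ x y : P, (collGraph N.Lines).dist x y = 2 →
      {z : P | (collGraph N.Lines).Adj x z ∧ (collGraph N.Lines).Adj z y}.ncard = 1) ∧
    (Nat.card P = 27 → ∀ x y : P, (collGraph N.Lines).dist x y = 2 →
      {z : P | (collGraph N.Lines).Adj x z ∧ (collGraph N.Lines).Adj z y}.ncard = 2) := by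
  have hfin : Nat.card P ≠ 0 → Fintype P := fun h =>
    @Fintype.ofFinite P (Nat.finite_of_card_ne_zero h)
  constructor
  · intro hcard x y hxy
    have : Fintype P := hfin (by omega)
    have hS := NearPolygon.three_mul_card_sphere_two hord x
    exact NearPolygon.ncard_commonNeighbors_eq_one hord (by omega) hxy
  · intro hcard x y hxy
    have : Fintype P := hfin (by omega)
    have hS := NearPolygon.three_mul_card_sphere_two hord x
    exact NearPolygon.ncard_commonNeighbors_eq_two hord (by omega) hxy
end

section
/- Let N be a near polygon and let H be a full isometrically embedded subgeometry of N such that (i) any two points of H at distance 2 in H have exactly one common neighbor in H, and (ii) no point of N outside H is collinear with two distinct points of H. Then for every quad Q of N whose intersection with the point set of H is nonempty, this intersection is either a single point or the point set of a line of H. -/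
/-!
Two distinct points `a, b` of `H` inside a quad `S` must be collinear.  Otherwise they are at
distance `2`, and the two lines of `S` through `a` carry two distinct neighbours of `b`; each is
collinear with two points of `H`, hence lies in `H`, so `a` and `b` would have two common
neighbours in `H`.  The points of `S ∩ H` are therefore pairwise collinear; once there are two of
them, they span a line `L` of `H` contained in the subspace `S`, and a further point would form a
triangle with two points of `L`, which a near polygon does not allow.
-/

open SimpleGraph

theorem NearPolygon.eq_of_adj_of_mem_line {P : Type*} {d : ℕ} (N : NearPolygon P d)
    {L : Set P} (hL : L ∈ N.Lines) {w a b : P} (hw : w ∉ L) (ha : a ∈ L) (hb : b ∈ L)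
    (hwa : (collGraph N.Lines).Adj w a) (hwb : (collGraph N.Lines).Adj w b) : a = b := by
  have hnearest : ∀ x ∈ L, (collGraph N.Lines).Adj w x →
      ∀ z ∈ L, (collGraph N.Lines).dist w x ≤ (collGraph N.Lines).dist w z := by
    intro x _ hx z hz
    rw [dist_eq_one_iff_adj.mpr hx]
    exact N.connected.pos_dist_of_ne (ne_of_mem_of_not_mem hz hw).symm
  exact (N.near w L hL).unique ⟨ha, hnearest a ha hwa⟩ ⟨hb, hnearest b hb hwb⟩

theorem NearPolygon.subset_line_of_pairwise_adj {P : Type*} {d : ℕ} (N : NearPolygon P d)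
    {X L : Set P} (hX : X.Pairwise (collGraph N.Lines).Adj) (hL : L ∈ N.Lines) {a b : P}
    (haX : a ∈ X) (hbX : b ∈ X) (haL : a ∈ L) (hbL : b ∈ L) (hab : a ≠ b) : X ⊆ L := by
  intro w hw
  by_contra hwL
  exact hab <| N.eq_of_adj_of_mem_line hL hwL haL hbL
    (hX hw haX (ne_of_mem_of_not_mem haL hwL).symm) (hX hw hbX (ne_of_mem_of_not_mem hbL hwL).symm)

theorem IsQuad.exists_ne_common_neighbors {P : Type*} {Lines : Set (Set P)}
    (hlin : ∀ L₁ ∈ Lines, ∀ L₂ ∈ Lines, ∀ x y : P,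
      x ≠ y → x ∈ L₁ → y ∈ L₁ → x ∈ L₂ → y ∈ L₂ → L₁ = L₂)
    {S : Set P} (hS : IsQuad Lines S) {x y : P} (hx : x ∈ S) (hy : y ∈ S) (hxy : x ≠ y)
    (hnadj : ¬ (collGraph Lines).Adj x y) :
    ∃ c₁ c₂, c₁ ≠ c₂ ∧ (collGraph Lines).Adj x c₁ ∧ (collGraph Lines).Adj c₁ y ∧
      (collGraph Lines).Adj x c₂ ∧ (collGraph Lines).Adj c₂ y := by
  obtain ⟨-, -, -, hGQ, htwo_lines, -⟩ := hS
  obtain ⟨L₁, hL₁, L₂, hL₂, hL₁S, hL₂S, hxL₁, hxL₂, hL₁₂⟩ := htwo_lines x hx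
  have hyL : ∀ L ∈ Lines, x ∈ L → y ∉ L := fun L hL hxL hyL => hnadj ⟨hxy, L, hL, hxL, hyL⟩
  obtain ⟨c₁, ⟨hc₁L, hyc₁⟩, -⟩ := hGQ y hy L₁ hL₁ hL₁S (hyL L₁ hL₁ hxL₁)
  obtain ⟨c₂, ⟨hc₂L, hyc₂⟩, -⟩ := hGQ y hy L₂ hL₂ hL₂S (hyL L₂ hL₂ hxL₂)
  have hc₁x : c₁ ≠ x := by rintro rfl; exact hnadj hyc₁.symm
  have hc₂x : c₂ ≠ x := by rintro rfl; exact hnadj hyc₂.symm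
  refine ⟨c₁, c₂, ?_, ⟨hc₁x.symm, L₁, hL₁, hxL₁, hc₁L⟩, hyc₁.symm,
    ⟨hc₂x.symm, L₂, hL₂, hxL₂, hc₂L⟩, hyc₂.symm⟩
  rintro rfl
  exact hL₁₂ (hlin L₁ hL₁ L₂ hL₂ c₁ x hc₁x hc₁L hxL₁ hc₂L hxL₂)

theorem IsFullIsomEmb.adj_iff {Q P : Type*} {LQ : Set (Set Q)} {LP : Set (Set P)} {ι : Q → P}
    (emb : IsFullIsomEmb LQ LP ι) {x y : Q} :
    (collGraph LP).Adj (ι x) (ι y) ↔ (collGraph LQ).Adj x y := by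
  rw [← dist_eq_one_iff_adj, ← dist_eq_one_iff_adj, emb.isometric]

theorem IsFullIsomEmb.exists_common_neighbor_preimage {Q P : Type*} {LQ : Set (Set Q)}
    {LP : Set (Set P)} {ι : Q → P} (emb : IsFullIsomEmb LQ LP ι)
    (hout : ∀ p : P, p ∉ Set.range ι → ∀ y1 y2 : Q,
      (collGraph LP).Adj p (ι y1) → (collGraph LP).Adj p (ι y2) → y1 = y2)
    {a b : Q} (hab : a ≠ b) {c : P} (hac : (collGraph LP).Adj (ι a) c)
    (hcb : (collGraph LP).Adj c (ι b)) :
    ∃ z, ι z = c ∧ (collGraph LQ).Adj a z ∧ (collGraph LQ).Adj z b := by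
  obtain ⟨z, rfl⟩ : c ∈ Set.range ι := by
    by_contra hc
    exact hab (hout c hc a b hac.symm hcb)
  exact ⟨z, rfl, emb.adj_iff.mp hac, emb.adj_iff.mp hcb⟩

theorem SimpleGraph.dist_eq_two_of_common_neighbor {V : Type*} {G : SimpleGraph V} {u v w : V}
    (huv : u ≠ v) (hnadj : ¬ G.Adj u v) (huw : G.Adj u w) (hwv : G.Adj w v) : G.dist u v = 2 := by
  rw [dist, edist_eq_two_iff.mpr ⟨huv, hnadj, w, huw, hwv.symm⟩]
  rfl

theorem IsFullIsomEmb.adj_of_mem_quad {Q P : Type*} {d : ℕ} {LQ : Set (Set Q)}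
    {N : NearPolygon P d} {ι : Q → P} (emb : IsFullIsomEmb LQ N.Lines ι)
    (hmu : ∀ x y : Q, (collGraph LQ).dist x y = 2 →
      ∃! z : Q, (collGraph LQ).Adj x z ∧ (collGraph LQ).Adj z y)
    (hout : ∀ p : P, p ∉ Set.range ι → ∀ y1 y2 : Q,
      (collGraph N.Lines).Adj p (ι y1) → (collGraph N.Lines).Adj p (ι y2) → y1 = y2)
    {S : Set P} (hS : IsQuad N.Lines S) {a b : Q} (ha : ι a ∈ S) (hb : ι b ∈ S) (hab : a ≠ b) :
    (collGraph LQ).Adj a b := by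
  by_contra hnadj
  obtain ⟨c₁, c₂, hc₁₂, hac₁, hc₁b, hac₂, hc₂b⟩ := hS.exists_ne_common_neighbors N.unique_line
    ha hb (emb.inj.ne hab) (mt emb.adj_iff.mp hnadj)
  obtain ⟨z₁, rfl, haz₁, hz₁b⟩ := emb.exists_common_neighbor_preimage hout hab hac₁ hc₁b
  obtain ⟨z₂, rfl, haz₂, hz₂b⟩ := emb.exists_common_neighbor_preimage hout hab hac₂ hc₂b
  have hdist : (collGraph LQ).dist a b = 2 :=
    dist_eq_two_of_common_neighbor hab hnadj haz₁ hz₁b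
  exact hc₁₂ (congrArg ι ((hmu a b hdist).unique ⟨haz₁, hz₁b⟩ ⟨haz₂, hz₂b⟩))

/-- Let `H` be a full isometrically embedded subgeometry of a
near polygon `N` such that (i) any two points of `H` at distance `2` in `H`
have exactly one common neighbor in `H`, and (ii) no point of `N` outside `H`
is collinear with two distinct points of `H`.  Then the intersection of any
quad of `N` with the point set of `H`, when nonempty, is a single point or
the point set of a line of `H`. -/
theorem quad_meets_subhexagon {Q P : Type*} {dQ dP : ℕ}
    (H : NearPolygon Q dQ) (N : NearPolygon P dP) (ι : Q → P)
    (emb : IsFullIsomEmb H.Lines N.Lines ι)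
    (hmu : ∀ x y : Q, (collGraph H.Lines).dist x y = 2 →
      ∃! z : Q, (collGraph H.Lines).Adj x z ∧ (collGraph H.Lines).Adj z y)
    (hout : ∀ p : P, p ∉ Set.range ι → ∀ y1 y2 : Q,
      (collGraph N.Lines).Adj p (ι y1) → (collGraph N.Lines).Adj p (ι y2) → y1 = y2) :
    ∀ S : Set P, IsQuad N.Lines S → (S ∩ Set.range ι).Nonempty →
      (∃ p : P, S ∩ Set.range ι = {p}) ∨
      (∃ L ∈ H.Lines, S ∩ Set.range ι = ι '' L) := by
  intro S hS hne
  rw [← Set.image_preimage_eq_inter_range] at hne ⊢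
  have hpairwise : (ι ⁻¹' S).Pairwise (collGraph H.Lines).Adj :=
    fun a ha b hb hab => emb.adj_of_mem_quad hmu hout hS ha hb hab
  rcases (Set.image_nonempty.mp hne).exists_eq_singleton_or_nontrivial with ⟨a, ha⟩ | hnontriv
  · exact Or.inl ⟨ι a, by rw [ha, Set.image_singleton]⟩
  obtain ⟨a, ha, b, hb, hab⟩ := hnontriv
  obtain ⟨-, L, hL, haL, hbL⟩ := hpairwise ha hb hab
  have hLS : L ⊆ ι ⁻¹' S := Set.image_subset_iff.mp <|
    hS.1.1 _ (emb.line_map L hL) (ι a) ⟨a, haL, rfl⟩ (ι b) ⟨b, hbL, rfl⟩ (emb.inj.ne hab) ha hb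
  have hSL : ι ⁻¹' S ⊆ L := H.subset_line_of_pairwise_adj hpairwise hL ha hb haL hbL hab
  exact Or.inr ⟨L, hL, by rw [hSL.antisymm hLS]⟩
end
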